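/- Let d be a positive squarefree integer with d ≡ 1 (mod 4) and n ≥ 1. Then there exists k₀ such that for all k ≥ k₀, with R = ℤ[√-d]/(2^k), σ the ring endomorphism induced by conjugation, and M = diag(1,…,1,-2) of size n+1, the number of matrices A ∈ M_{n+1}(R) with A·M·σ(A)ᵀ = M equals 2^{k+2} times the number of such matrices that in addition satisfy det A = 1. -/

import Mathlib

open Matrix

/-- The quotient ring `ℤ[√-d]/(m)`. -/
abbrev Rq (d m : ℤ) : Type := Zsqrtd (-d) ⧸ Ideal.span {(m : Zsqrtd (-d))}

/-- Conjugation `a + b√-d ↦ a - b√-d` descends to the quotient `ℤ[√-d]/(m)`. -/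
noncomputable def conjQ (d m : ℤ) : Rq d m →+* Rq d m :=
  Ideal.quotientMap (Ideal.span {(m : Zsqrtd (-d))}) (starRingEnd (Zsqrtd (-d)))
    (by
      rw [Ideal.span_singleton_le_iff_mem, Ideal.mem_comap, map_intCast]
      exact Ideal.mem_span_singleton_self _)

/-- The diagonal matrix `diag(1, …, 1, -2)` of size `n+1`. -/
def Mmat (R : Type*) [Ring R] (n : ℕ) : Matrix (Fin (n + 1)) (Fin (n + 1)) R :=
  Matrix.diagonal fun i => if i = Fin.last n then -2 else 1

/-!
Taking determinants in `A M σ(A)ᵀ = M` with `det M = -2` shows that `u = det A` lies in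
`D = {u | 2 u σ(u) = 2}`. For `k ≥ 2` every element of `D` is a unit, so right multiplication by
`diag(1, …, 1, u)` identifies `D × SU(M)` with `U(M)`, and it remains to show `#D = 2^(k+2)`.

Writing `u = a + b√-d`, the set `D` becomes `{(a, b) ∈ (ℤ/2^k)² | a² + d b² ≡ 1 mod 2^(k-1)}`.
This condition only depends on `(a, b)` modulo `2^(k-1)`, so `#D = 4 S(k-1)`, where `S(m)`
counts the solutions of `a² + d b² = 1` in `ℤ/2^m`. On the other hand, for `k ≥ 4`, translation
by `(2^(k-2), 2^(k-2))` exchanges the solutions of `a² + d b² = 1` and of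
`a² + d b² = 1 + 2^(k-1)` modulo `2^k`, so `#D = 2 S(k)`. Hence `S(m+1) = 2 S(m)` for `m ≥ 3`,
and `S(3) = 16` because `d ≡ 1 mod 4`.
-/

theorem AddMonoidHom.card_preimage_mul_card_eq {G H : Type*} [AddGroup G] [AddGroup H]
    (f : G →+ H) (hf : Function.Surjective f) (s : Set H) :
    Nat.card (f ⁻¹' s) * Nat.card H = Nat.card G * Nat.card s := by
  let e := QuotientAddGroup.quotientKerEquivOfSurjective f hf
  have hpre : f ⁻¹' s = QuotientAddGroup.mk ⁻¹' (e ⁻¹' s) := rfl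
  rw [hpre, Nat.card_congr (QuotientAddGroup.preimageMkEquivAddSubgroupProdSet _ _), Nat.card_prod,
    Nat.card_preimage_of_injective e.injective (by simp [e.surjective.range_eq]),
    AddSubgroup.card_eq_card_quotient_mul_card_addSubgroup f.ker, Nat.card_congr e.toEquiv]
  ring

namespace ZMod

theorem two_pow_eq_zero (n : ℕ) : (2 : ZMod (2 ^ n)) ^ n = 0 := by
  exact_mod_cast natCast_self (2 ^ n)

theorem two_pow_ne_zero (m : ℕ) : (2 : ZMod (2 ^ (m + 1))) ^ m ≠ 0 := by
  have h : ((2 ^ m : ℕ) : ZMod (2 ^ (m + 1))) ≠ 0 := by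
    rw [Ne, natCast_eq_zero_iff, Nat.pow_dvd_pow_iff_le_right (by norm_num)]
    omega
  exact_mod_cast h

theorem mul_sq_eq_mul_self {n : ℕ} {c : ZMod n} (hc : 2 * c = 0) (a : ZMod n) :
    c * a ^ 2 = c * a := by
  obtain ⟨t, rfl⟩ := intCast_surjective a
  obtain ⟨r, hr⟩ := Int.even_mul_pred_self t
  have hr' : ((t * (t - 1) : ℤ) : ZMod n) = ((2 * r : ℤ) : ZMod n) := by rw [hr, two_mul]
  push_cast at hr'
  linear_combination c * hr' + r * hc

theorem two_mul_eq_two_iff_castHom (m : ℕ) (x : ZMod (2 ^ (m + 1))) :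
    2 * x = 2 ↔ castHom (pow_dvd_pow 2 (Nat.le_add_right m 1)) (ZMod (2 ^ m)) x = 1 := by
  obtain ⟨t, rfl⟩ := intCast_surjective x
  rw [map_intCast, ← Int.cast_one, ← Int.cast_ofNat, ← Int.cast_mul,
    intCast_eq_intCast_iff_dvd_sub, intCast_eq_intCast_iff_dvd_sub]
  push_cast
  rw [pow_succ', show (2 : ℤ) - 2 * t = 2 * (1 - t) by ring]
  exact mul_dvd_mul_iff_left two_ne_zero

theorem two_mul_eq_two_iff (m : ℕ) (x : ZMod (2 ^ (m + 1))) :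
    2 * x = 2 ↔ x = 1 ∨ x = 1 + 2 ^ m := by
  have h0 := two_pow_eq_zero (m + 1)
  refine ⟨fun h => ?_, ?_⟩
  · obtain ⟨t, rfl⟩ := intCast_surjective x
    rw [two_mul_eq_two_iff_castHom, map_intCast, ← Int.cast_one,
      intCast_eq_intCast_iff_dvd_sub] at h
    obtain ⟨s, hs⟩ := h
    obtain rfl : t = 1 - 2 ^ m * s := by push_cast at hs; linarith
    rcases Int.even_or_odd' s with ⟨r, rfl | rfl⟩
    · left; push_cast; linear_combination (-r) * h0
    · right; push_cast; linear_combination (-(r + 1)) * h0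
  · rintro (rfl | rfl)
    · ring
    · linear_combination h0

theorem isUnit_of_two_mul_eq_two {m : ℕ} (hm : m ≠ 0) {x : ZMod (2 ^ (m + 1))} (h : 2 * x = 2) :
    IsUnit x := by
  rcases (two_mul_eq_two_iff m x).1 h with rfl | rfl
  · exact isUnit_one
  · refine .of_mul_eq_one (1 + 2 ^ m) ?_
    obtain ⟨i, rfl⟩ : ∃ i, m = i + 1 := ⟨m - 1, by omega⟩
    linear_combination (1 + 2 ^ i) * two_pow_eq_zero (i + 1 + 1)

end ZMod

def normForm {R : Type*} [CommRing R] (d : ℤ) (p : R × R) : R := p.1 ^ 2 + d * p.2 ^ 2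

theorem map_normForm {R S : Type*} [CommRing R] [CommRing S] (d : ℤ) (f : R →+* S)
    (p : R × R) : f (normForm d p) = normForm d (Prod.map f f p) := by
  simp [normForm]

noncomputable def normOneCount (d : ℤ) (n : ℕ) : ℕ :=
  Nat.card {p : ZMod n × ZMod n // normForm d p = 1}

section NormOneCount

variable (d : ℤ)

theorem normOneCount_two_pow_three (hd : d % 4 = 1) : normOneCount d (2 ^ 3) = 16 := by
  obtain ⟨c, hc, hdc⟩ : ∃ c : ZMod (2 ^ 3), (c = 1 ∨ c = 5) ∧ (d : ZMod (2 ^ 3)) = c := by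
    rw [← ZMod.intCast_mod d (2 ^ 3)]
    rcases (by omega : d % 8 = 1 ∨ d % 8 = 5) with h | h
    · exact ⟨1, by decide, by push_cast; rw [h]; rfl⟩
    · exact ⟨5, by decide, by push_cast; rw [h]; rfl⟩
  rw [normOneCount, Nat.card_congr (Equiv.subtypeEquivRight
    (q := fun p => p.1 ^ 2 + c * p.2 ^ 2 = 1) fun p => by rw [normForm, hdc]),
    Nat.card_eq_fintype_card]
  rcases hc with rfl | rfl <;> decide

theorem card_two_mul_normForm_eq_two_eq_four_mul (m : ℕ) :
    Nat.card {p : ZMod (2 ^ (m + 1)) × ZMod (2 ^ (m + 1)) // 2 * normForm d p = 2} =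
      4 * normOneCount d (2 ^ m) := by
  let r := ZMod.castHom (pow_dvd_pow 2 (Nat.le_add_right m 1)) (ZMod (2 ^ m))
  have hr : Function.Surjective r := ZMod.castHom_surjective _
  have key := (r.toAddMonoidHom.prodMap r.toAddMonoidHom).card_preimage_mul_card_eq
    (hr.prodMap hr) {q | normForm d q = 1}
  rw [Nat.card_congr (Equiv.subtypeEquivRight (q := fun p => 2 * normForm d p = 2) fun p => by
      rw [ZMod.two_mul_eq_two_iff_castHom, map_normForm]; rfl),
    Nat.card_prod, Nat.card_prod, Nat.card_zmod, Nat.card_zmod, Set.coe_ofPred] at key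
  refine Nat.eq_of_mul_eq_mul_right (by positivity : 0 < 2 ^ m * 2 ^ m) (key.trans ?_)
  rw [normOneCount]
  ring

theorem normForm_add_two_pow (j : ℕ) (p : ZMod (2 ^ (j + 4)) × ZMod (2 ^ (j + 4)))
    (hp : 2 * normForm d p = 2) :
    normForm d (p + (2 ^ (j + 2), 2 ^ (j + 2))) = normForm d p + 2 ^ (j + 3) := by
  have h0 := ZMod.two_pow_eq_zero (j + 4)
  have hc : 2 * (2 : ZMod (2 ^ (j + 4))) ^ (j + 3) = 0 := by rw [← pow_succ']; exact h0
  have ha := ZMod.mul_sq_eq_mul_self hc p.1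
  have hb := ZMod.mul_sq_eq_mul_self hc p.2
  simp only [normForm, Prod.fst_add, Prod.snd_add] at hp ⊢
  linear_combination 2 ^ (j + 2) * hp - ha - (d : ZMod (2 ^ (j + 4))) * hb +
    (1 + (d : ZMod (2 ^ (j + 4)))) * 2 ^ j * h0

theorem card_two_mul_normForm_eq_two_eq_two_mul (j : ℕ) :
    Nat.card {p : ZMod (2 ^ (j + 4)) × ZMod (2 ^ (j + 4)) // 2 * normForm d p = 2} =
      2 * normOneCount d (2 ^ (j + 4)) := by
  have h0 := ZMod.two_pow_eq_zero (j + 4)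
  have hdisj : Disjoint (fun p : ZMod (2 ^ (j + 4)) × ZMod (2 ^ (j + 4)) => normForm d p = 1)
      (fun p => normForm d p = 1 + 2 ^ (j + 3)) := by
    rw [Pi.disjoint_iff]
    intro p
    simp only [Prop.disjoint_iff, not_and]
    intro h1 h2
    exact ZMod.two_pow_ne_zero (j + 3) (by linear_combination h1 - h2)
  have hshift : Nat.card {p : ZMod (2 ^ (j + 4)) × ZMod (2 ^ (j + 4)) //
      normForm d p = 1 + 2 ^ (j + 3)} = normOneCount d (2 ^ (j + 4)) := by
    refine le_antisymm (Nat.card_le_card_of_injective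
      (fun p => ⟨p.1 + (2 ^ (j + 2), 2 ^ (j + 2)), ?_⟩) ?_) (Nat.card_le_card_of_injective
      (fun p => ⟨p.1 + (2 ^ (j + 2), 2 ^ (j + 2)), ?_⟩) ?_)
    · rw [normForm_add_two_pow d j p.1 (by rw [p.2]; linear_combination h0), p.2]
      linear_combination h0
    · exact fun p q h => Subtype.ext (add_right_cancel (congrArg Subtype.val h))
    · rw [normForm_add_two_pow d j p.1 (by rw [p.2]; ring), p.2]
    · exact fun p q h => Subtype.ext (add_right_cancel (congrArg Subtype.val h))
  rw [Nat.card_congr (Equiv.subtypeEquivRight fun p => ZMod.two_mul_eq_two_iff (j + 3) _),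
    Nat.card_congr (subtypeOrEquiv _ _ hdisj), Nat.card_sum, hshift, normOneCount]
  ring

theorem normOneCount_succ (j : ℕ) :
    normOneCount d (2 ^ (j + 4)) = 2 * normOneCount d (2 ^ (j + 3)) := by
  have h := card_two_mul_normForm_eq_two_eq_four_mul d (j + 3)
  rw [card_two_mul_normForm_eq_two_eq_two_mul d j] at h
  omega

theorem normOneCount_two_pow (hd : d % 4 = 1) (j : ℕ) :
    normOneCount d (2 ^ (j + 3)) = 2 ^ (j + 4) := by
  induction j with
  | zero => exact normOneCount_two_pow_three d hd
  | succ j ih => rw [show j + 1 + 3 = j + 4 by ring, normOneCount_succ, ih]; ring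

theorem card_two_mul_normForm_eq_two_two_pow (hd : d % 4 = 1) (j : ℕ) :
    Nat.card {p : ZMod (2 ^ (j + 4)) × ZMod (2 ^ (j + 4)) // 2 * normForm d p = 2} =
      2 ^ (j + 6) := by
  rw [card_two_mul_normForm_eq_two_eq_four_mul d (j + 3), normOneCount_two_pow d hd]
  ring

end NormOneCount

namespace Rq

variable (d : ℤ) (m : ℕ)

instance : CharP (Rq d m) m := by
  refine ⟨fun x => ?_⟩
  rw [← map_natCast (Ideal.Quotient.mk _), Ideal.Quotient.eq_zero_iff_mem,
    Ideal.mem_span_singleton, ← Int.cast_natCast x, Zsqrtd.intCast_dvd_intCast,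
    Int.natCast_dvd_natCast]

noncomputable def ofCoords (p : ZMod m × ZMod m) : Rq d m :=
  ZMod.castHom dvd_rfl _ p.1 + ZMod.castHom dvd_rfl _ p.2 * Ideal.Quotient.mk _ Zsqrtd.sqrtd

theorem ofCoords_intCast (x y : ℤ) :
    ofCoords d m ((x : ZMod m), (y : ZMod m)) = Ideal.Quotient.mk _ ⟨x, y⟩ := by
  rw [ofCoords, map_intCast, map_intCast, Zsqrtd.decompose, map_add, map_mul, map_intCast,
    map_intCast, mul_comm]

theorem ofCoords_bijective : Function.Bijective (ofCoords d m) := by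
  refine ⟨fun ⟨a, b⟩ ⟨a', b'⟩ h => ?_, fun u => ?_⟩
  · obtain ⟨x, rfl⟩ := ZMod.intCast_surjective a
    obtain ⟨y, rfl⟩ := ZMod.intCast_surjective b
    obtain ⟨x', rfl⟩ := ZMod.intCast_surjective a'
    obtain ⟨y', rfl⟩ := ZMod.intCast_surjective b'
    rw [ofCoords_intCast, ofCoords_intCast, Ideal.Quotient.eq, Ideal.mem_span_singleton,
      Zsqrtd.intCast_dvd, Zsqrtd.re_sub, Zsqrtd.im_sub] at h
    simp only [ZMod.intCast_eq_intCast_iff_dvd_sub, Prod.mk.injEq]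
    exact ⟨dvd_sub_comm.mp h.1, dvd_sub_comm.mp h.2⟩
  · obtain ⟨z, rfl⟩ := Ideal.Quotient.mk_surjective u
    exact ⟨(z.re, z.im), ofCoords_intCast d m z.re z.im⟩

theorem ofCoords_mul_conjQ (p : ZMod m × ZMod m) :
    ofCoords d m p * conjQ d m (ofCoords d m p) = ZMod.castHom dvd_rfl _ (normForm d p) := by
  have hc : ∀ a : ZMod m, conjQ d m (ZMod.castHom dvd_rfl _ a) = ZMod.castHom dvd_rfl _ a :=
    RingHom.congr_fun (RingHom.ext_zmod ((conjQ d m).comp (ZMod.castHom dvd_rfl _)) _)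
  have hs : conjQ d m (Ideal.Quotient.mk _ Zsqrtd.sqrtd) = -Ideal.Quotient.mk _ Zsqrtd.sqrtd := by
    rw [conjQ, Ideal.quotientMap_mk, ← map_neg]
    rfl
  have hs2 : (Ideal.Quotient.mk _ Zsqrtd.sqrtd : Rq d m) ^ 2 = -d := by
    rw [sq, ← map_mul, Zsqrtd.dmuld, map_intCast, Int.cast_neg]
  rw [ofCoords, map_add, map_mul, hc, hc, hs, normForm, map_add, map_mul, map_pow, map_pow,
    map_intCast]
  linear_combination (-(ZMod.castHom dvd_rfl (Rq d m) p.2) ^ 2) * hs2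

theorem two_mul_ofCoords_mul_conjQ_eq_two_iff (p : ZMod m × ZMod m) :
    2 * ofCoords d m p * conjQ d m (ofCoords d m p) = 2 ↔ 2 * normForm d p = 2 := by
  rw [mul_assoc, ofCoords_mul_conjQ, ← map_ofNat (ZMod.castHom dvd_rfl (Rq d m)) 2, ← map_mul,
    (ZMod.castHom_injective _).eq_iff]

theorem card_two_mul_mul_conjQ_eq_two :
    Nat.card {u : Rq d m // 2 * u * conjQ d m u = 2} =
      Nat.card {p : ZMod m × ZMod m // 2 * normForm d p = 2} :=
  Nat.card_congr ((Equiv.ofBijective _ (ofCoords_bijective d m)).subtypeEquiv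
    fun p => (two_mul_ofCoords_mul_conjQ_eq_two_iff d m p).symm).symm

theorem isUnit_of_two_mul_mul_conjQ_eq_two {k : ℕ} (hk : k ≠ 0) {u : Rq d (2 ^ (k + 1) : ℕ)}
    (hu : 2 * u * conjQ d _ u = 2) : IsUnit u := by
  obtain ⟨p, rfl⟩ := (ofCoords_bijective d _).2 u
  have h := (ZMod.isUnit_of_two_mul_eq_two hk
    ((two_mul_ofCoords_mul_conjQ_eq_two_iff d _ p).1 hu)).map
    (ZMod.castHom dvd_rfl (Rq d (2 ^ (k + 1) : ℕ)))
  rw [← ofCoords_mul_conjQ] at h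
  exact isUnit_of_mul_isUnit_left h

end Rq

section Unitary

variable {R : Type*} [CommRing R] (σ : R →+* R) (n : ℕ)

abbrev IsUnitaryM (A : Matrix (Fin (n + 1)) (Fin (n + 1)) R) : Prop :=
  A * Mmat R n * (A.map σ)ᵀ = Mmat R n

def lastDiag (u : R) : Matrix (Fin (n + 1)) (Fin (n + 1)) R :=
  diagonal fun i => if i = Fin.last n then u else 1

theorem lastDiag_mul_lastDiag (u v : R) : lastDiag n u * lastDiag n v = lastDiag n (u * v) := by
  simp only [lastDiag, diagonal_mul_diagonal]
  congr 1
  ext i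
  split_ifs <;> simp

theorem lastDiag_one : lastDiag n (1 : R) = 1 := by
  simp [lastDiag]

theorem det_lastDiag (u : R) : (lastDiag n u).det = u := by
  simp [lastDiag, det_diagonal, Finset.prod_ite_eq']

theorem det_Mmat : (Mmat R n).det = -2 := by
  simp [Mmat, det_diagonal]

variable {σ n}

theorem isUnitaryM_lastDiag {u : R} (hu : 2 * u * σ u = 2) : IsUnitaryM σ n (lastDiag n u) := by
  rw [IsUnitaryM, lastDiag, Mmat, diagonal_map (map_zero σ), diagonal_transpose,
    diagonal_mul_diagonal, diagonal_mul_diagonal]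
  congr 1
  ext i
  split_ifs
  · linear_combination -hu
  · simp

theorem IsUnitaryM.mul {A B : Matrix (Fin (n + 1)) (Fin (n + 1)) R} (hA : IsUnitaryM σ n A)
    (hB : IsUnitaryM σ n B) : IsUnitaryM σ n (A * B) := by
  rw [IsUnitaryM, Matrix.map_mul, transpose_mul]
  calc A * B * Mmat R n * ((B.map σ)ᵀ * (A.map σ)ᵀ)
      = A * (B * Mmat R n * (B.map σ)ᵀ) * (A.map σ)ᵀ := by simp only [Matrix.mul_assoc]
    _ = Mmat R n := by rw [hB, hA]

theorem IsUnitaryM.two_mul_det_mul_map_det {A : Matrix (Fin (n + 1)) (Fin (n + 1)) R}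
    (hA : IsUnitaryM σ n A) : 2 * A.det * σ A.det = 2 := by
  have h := congrArg det hA
  rw [det_mul, det_mul, det_transpose, ← RingHom.mapMatrix_apply, ← RingHom.map_det,
    det_Mmat] at h
  linear_combination -h

theorem two_mul_mul_map_of_mul_eq_one {u w : R} (hu : 2 * u * σ u = 2) (h : u * w = 1) :
    2 * w * σ w = 2 := by
  have hσ : σ u * σ w = 1 := by rw [← map_mul, h, map_one]
  linear_combination (-(w * σ w)) * hu + 2 * (σ u * σ w) * h + 2 * hσ

variable (σ n)

theorem card_isUnitaryM_eq_card_mul_card_det_eq_one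
    (hunit : ∀ u : R, 2 * u * σ u = 2 → IsUnit u) :
    Nat.card {A // IsUnitaryM σ n A} =
      Nat.card {u : R // 2 * u * σ u = 2} * Nat.card {A // IsUnitaryM σ n A ∧ A.det = 1} := by
  rw [← Nat.card_prod]
  refine Nat.card_congr (Equiv.ofBijective (fun x => ⟨x.2.1 * lastDiag n x.1.1,
    x.2.2.1.mul (isUnitaryM_lastDiag x.1.2)⟩) ⟨?_, ?_⟩).symm
  · rintro ⟨⟨u, hu⟩, ⟨B, hB, hB1⟩⟩ ⟨⟨v, hv⟩, ⟨C, hC, hC1⟩⟩ h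
    obtain rfl : u = v := by
      simpa [det_mul, det_lastDiag, hB1, hC1] using congrArg (fun A => det A.1) h
    have hE : IsUnit (lastDiag n u) := by
      rw [isUnit_iff_isUnit_det, det_lastDiag]
      exact hunit u hu
    obtain rfl : B = C := hE.mul_left_inj.mp (congrArg Subtype.val h)
    rfl
  · rintro ⟨A, hA⟩
    have hu := hA.two_mul_det_mul_map_det
    obtain ⟨w, hw⟩ := (hunit _ hu).exists_right_inv
    refine ⟨⟨⟨A.det, hu⟩, ⟨A * lastDiag n w,
      hA.mul (isUnitaryM_lastDiag (two_mul_mul_map_of_mul_eq_one hu hw)), ?_⟩⟩, ?_⟩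
    · rw [det_mul, det_lastDiag, hw]
    · ext1
      show A * lastDiag n w * lastDiag n A.det = A
      rw [Matrix.mul_assoc, lastDiag_mul_lastDiag, mul_comm, hw, lastDiag_one, Matrix.mul_one]

end Unitary

theorem card_U_M_eq_index_mul_card_SU_M_two_ramified_general (d : ℤ) (hd4 : d % 4 = 1) (n : ℕ) :
    ∃ k₀ : ℕ, ∀ k ≥ k₀,
      Nat.card {A : Matrix (Fin (n + 1)) (Fin (n + 1)) (Rq d (2 ^ k)) //
          A * Mmat (Rq d (2 ^ k)) n * (A.map (conjQ d (2 ^ k)))ᵀ = Mmat (Rq d (2 ^ k)) n}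
        = 2 ^ (k + 2) *
          Nat.card {A : Matrix (Fin (n + 1)) (Fin (n + 1)) (Rq d (2 ^ k)) //
            A * Mmat (Rq d (2 ^ k)) n * (A.map (conjQ d (2 ^ k)))ᵀ = Mmat (Rq d (2 ^ k)) n ∧
            A.det = 1} := by
  refine ⟨4, fun k hk => ?_⟩
  obtain ⟨j, rfl⟩ : ∃ j, k = j + 4 := ⟨k - 4, by omega⟩
  rw [show (2 : ℤ) ^ (j + 4) = ((2 ^ (j + 4) : ℕ) : ℤ) by push_cast; rfl,
    card_isUnitaryM_eq_card_mul_card_det_eq_one _ n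
      fun u => Rq.isUnit_of_two_mul_mul_conjQ_eq_two d (k := j + 3) (by omega),
    Rq.card_two_mul_mul_conjQ_eq_two, card_two_mul_normForm_eq_two_two_pow d hd4]

/-- Ramified index formula for `M`: for all sufficiently large `k`,
`#U(M, ℤ[√-d]/(2^k)) = 2^{k+2} · #SU(M, ℤ[√-d]/(2^k))`. -/
theorem card_U_M_eq_index_mul_card_SU_M_two_ramified (d : ℤ) (hd : 0 < d)
    (hsf : Squarefree d) (hd4 : d % 4 = 1) (n : ℕ) (hn : 1 ≤ n) :
    ∃ k₀ : ℕ, ∀ k ≥ k₀,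
      Nat.card {A : Matrix (Fin (n + 1)) (Fin (n + 1)) (Rq d (2 ^ k)) //
          A * Mmat (Rq d (2 ^ k)) n * (A.map (conjQ d (2 ^ k)))ᵀ = Mmat (Rq d (2 ^ k)) n}
        = 2 ^ (k + 2) *
          Nat.card {A : Matrix (Fin (n + 1)) (Fin (n + 1)) (Rq d (2 ^ k)) //
            A * Mmat (Rq d (2 ^ k)) n * (A.map (conjQ d (2 ^ k)))ᵀ = Mmat (Rq d (2 ^ k)) n ∧
            A.det = 1} :=
  card_U_M_eq_index_mul_card_SU_M_two_ramified_general d hd4 n
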